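/- Theorem 1 (mean of the watermarked posterior): with $Q'(y) = \frac{(x_t' - \sqrt{\alpha_t} y - c_t)^2}{1-\alpha_t} + \frac{(y - \sqrt{\bar\alpha_{t-1}} x_0' - d_{t-1})^2}{1-\bar\alpha_{t-1}}$, $c_t = (1-\gamma)(b_t - \sqrt{\alpha_t} b_{t-1})$, $d_{t-1} = (1-\gamma)(b_{t-1} - \sqrt{\bar\alpha_{t-1}} b_0)$, and $x_t' = \sqrt{\bar\alpha_t} x_0' + \gamma\sqrt{1-\bar\alpha_t}\epsilon_t' + (1-\gamma)(b_t - \sqrt{\bar\alpha_t} b_0)$, the minimizer of $Q'$ equals $\mu' = \frac{1}{\sqrt{\alpha_t}} x_t' - \frac{1-\alpha_t}{\sqrt{1-\bar\alpha_t}\sqrt{\alpha_t}}\left(\gamma\epsilon_t' + (1-\gamma)\frac{\sqrt{1-\bar\alpha_t}}{1-\alpha_t}(b_t - \sqrt{\alpha_t} b_{t-1})\right)$. -/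
import Mathlib

set_option maxHeartbeats 1000000 in
theorem stmt_9 (αt αbar_prev : ℝ) (hα : αt ∈ Set.Ioo (0:ℝ) 1)
    (hαbar : αbar_prev ∈ Set.Ioo (0:ℝ) 1) (αbar_t : ℝ) (hdef : αbar_t = αt * αbar_prev)
    (γ : ℝ) (hγ : γ ∈ Set.Ioc (0:ℝ) 1)
    (x0' εt' bt bt_prev b0 : ℝ)
    (ct : ℝ) (hct : ct = (1 - γ) * (bt - Real.sqrt αt * bt_prev))
    (dt : ℝ) (hdt : dt = (1 - γ) * (bt_prev - Real.sqrt αbar_prev * b0))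
    (xt' : ℝ)
    (hxt' : xt' = Real.sqrt αbar_t * x0' + γ * Real.sqrt (1 - αbar_t) * εt'
        + (1 - γ) * (bt - Real.sqrt αbar_t * b0))
    (Q' : ℝ → ℝ)
    (hQ' : ∀ y, Q' y = (xt' - Real.sqrt αt * y - ct)^2 / (1 - αt)
        + (y - Real.sqrt αbar_prev * x0' - dt)^2 / (1 - αbar_prev))
    (μ' : ℝ)
    (hμ' : μ' = (1 / Real.sqrt αt) * xt'
        - (1 - αt) / (Real.sqrt (1 - αbar_t) * Real.sqrt αt)
          * (γ * εt' + (1 - γ) * (Real.sqrt (1 - αbar_t) / (1 - αt))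
              * (bt - Real.sqrt αt * bt_prev))) :
    ∀ y : ℝ, Q' μ' ≤ Q' y ∧ (Q' μ' = Q' y → y = μ') := by
  obtain ⟨ha0, ha1⟩ := hα
  obtain ⟨hb0, hb1⟩ := hαbar
  have h1a : (0:ℝ) < 1 - αt := by linarith
  have h1b : (0:ℝ) < 1 - αbar_prev := by linarith
  subst hdef
  have hApos : 0 < αt/(1-αt) + 1/(1-αbar_prev) :=
    add_pos (div_pos ha0 h1a) (div_pos one_pos h1b)
  have hmin : (αt/(1-αt) + 1/(1-αbar_prev)) * μ' =
      Real.sqrt αt*(xt'-ct)/(1-αt) + (Real.sqrt αbar_prev*x0'+dt)/(1-αbar_prev) := by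
    set sa := Real.sqrt αt with hsad
    set sb := Real.sqrt αbar_prev with hsbd
    set s1 := Real.sqrt (1 - αt * αbar_prev) with hs1d
    have hsa : sa^2 = αt := Real.sq_sqrt ha0.le
    have hsb : sb^2 = αbar_prev := Real.sq_sqrt hb0.le
    have hs1 : s1^2 = 1 - sa^2 * sb^2 := by
      rw [hs1d, Real.sq_sqrt (by nlinarith), hsa, hsb]
    have hsa0 : 0 < sa := Real.sqrt_pos.mpr ha0
    have hsb0 : 0 < sb := Real.sqrt_pos.mpr hb0
    have hs10 : 0 < s1 := Real.sqrt_pos.mpr (by nlinarith)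
    have hsc : Real.sqrt (αt * αbar_prev) = sa * sb := Real.sqrt_mul ha0.le _
    have h3 : s1^3 = (1 - sa^2*sb^2)*s1 := by rw [pow_succ, hs1]
    have h4 : s1^4 = (1 - sa^2*sb^2)^2 := by rw [show (4:ℕ)=2*2 from rfl, pow_mul, hs1]
    have e1 : (1:ℝ) - sa^2 ≠ 0 := by rw [hsa]; linarith
    have hμ2 : μ' = sb*x0' + γ*sa*(1-sb^2)*εt'/s1 + (1-γ)*(bt_prev - sb*b0) := by
      rw [hμ', hxt', hsc, ← hsa]
      field_simp [e1]
      ring_nf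
      simp only [h4, h3, hs1]
      ring
    rw [hμ2, hxt', hct, hdt, hsc]
    field_simp [h1a.ne', h1b.ne']
    rw [← hsa, ← hsb]
    ring_nf
    simp only [h4, h3, hs1]
    ring
  have hsa' : Real.sqrt αt ^ 2 = αt := Real.sq_sqrt ha0.le
  intro y
  have hdiff : ∀ z : ℝ, Q' z - Q' μ' = (αt/(1-αt) + 1/(1-αbar_prev)) * (z - μ')^2 := by
    intro z
    rw [hQ' z, hQ' μ']
    linear_combination (2*(z - μ')) * hmin + ((z^2 - μ'^2)/(1-αt)) * hsa'
  constructor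
  · linarith [hdiff y, mul_nonneg hApos.le (sq_nonneg (y - μ'))]
  · intro h
    have h0 : (αt/(1-αt) + 1/(1-αbar_prev)) * (y - μ')^2 = 0 := by linarith [hdiff y]
    have h1 : (y - μ')^2 = 0 := by
      rcases mul_eq_zero.mp h0 with h' | h'
      · exact absurd h' hApos.ne'
      · exact h'
    have h2 : y - μ' = 0 := by
      have := sq_eq_zero_iff.mp h1
      linarith [this]
    linarith
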